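/- arXiv:1503.00922 — 4 statements merged into one kernel-verified Lean document; each statement's English description precedes it below -/
import Mathlib

section
/- The function u(n,t) = (k²·e^{-γkt} / (n·e^{-γkt} + k − n)²) · u₀(k·n·e^{-γkt} / (n·e^{-γkt} + k − n)) satisfies the PDE ∂u/∂t + γ·n·(k−n)·∂u/∂n + γ·(k−2n)·u = 0 on the strip 0 < n < k with u(n,0) = u₀(n). -/
/-!
Write `v n = γ n (k - n)` for the logistic velocity field. The formula is
`u(n, t) = J(n, t) · u₀(Φ(n, t))`, where `Φ(n, t)` is the point the logistic flow carries
to `n` in time `t` and `J = ∂Φ/∂n` is its Jacobian. Being constant along characteristics,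
`Φ` solves the transport equation `Φₜ + v Φₙ = 0`, and the Jacobian solves the continuity
equation `Jₜ + v Jₙ + v' J = 0`; the product rule then gives the continuity equation for
`u`. At `t = 0` the flow is the identity, so `Φ = n` and `J = 1`.
-/

open Real

theorem hasDerivAt_exp_const_mul (c t : ℝ) :
    HasDerivAt (fun s => exp (c * s)) (c * exp (c * t)) t := by
  simpa [mul_comm] using ((hasDerivAt_id t).const_mul c).exp

theorem continuity_mul_comp_of_transport {Φ J : ℝ → ℝ → ℝ} {f : ℝ → ℝ}
    {n t v v' Φₜ Φₙ Jₜ Jₙ : ℝ}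
    (hΦₜ : HasDerivAt (fun s => Φ n s) Φₜ t) (hΦₙ : HasDerivAt (fun m => Φ m t) Φₙ n)
    (hJₜ : HasDerivAt (fun s => J n s) Jₜ t) (hJₙ : HasDerivAt (fun m => J m t) Jₙ n)
    (hf : DifferentiableAt ℝ f (Φ n t))
    (hΦ : Φₜ + v * Φₙ = 0) (hJ : Jₜ + v * Jₙ + v' * J n t = 0) :
    deriv (fun s => J n s * f (Φ n s)) t + v * deriv (fun m => J m t * f (Φ m t)) n +
      v' * (J n t * f (Φ n t)) = 0 := by
  have hₜ : HasDerivAt (fun s => J n s * f (Φ n s))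
      (Jₜ * f (Φ n t) + J n t * (deriv f (Φ n t) * Φₜ)) t :=
    hJₜ.mul (hf.hasDerivAt.comp t hΦₜ)
  have hₙ : HasDerivAt (fun m => J m t * f (Φ m t))
      (Jₙ * f (Φ n t) + J n t * (deriv f (Φ n t) * Φₙ)) n :=
    hJₙ.mul (hf.hasDerivAt.comp n hΦₙ)
  rw [hₜ.deriv, hₙ.deriv]
  linear_combination f (Φ n t) * hJ + J n t * deriv f (Φ n t) * hΦ

namespace Logistic

variable (γ k : ℝ)

/-- The point that the flow of `n' = γ n (k - n)` carries to `n` in time `t`. -/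
noncomputable def backwardFlow (n t : ℝ) : ℝ :=
  k * n * exp (-γ * k * t) / (n * exp (-γ * k * t) + k - n)

noncomputable def backwardFlowJacobian (n t : ℝ) : ℝ :=
  k ^ 2 * exp (-γ * k * t) / (n * exp (-γ * k * t) + k - n) ^ 2

variable {γ k}

theorem backwardFlow_zero (hk : k ≠ 0) (n : ℝ) : backwardFlow γ k n 0 = n := by
  simp only [backwardFlow, mul_zero, exp_zero, mul_one, add_sub_cancel_left]
  field_simp

theorem backwardFlowJacobian_zero (hk : k ≠ 0) (n : ℝ) : backwardFlowJacobian γ k n 0 = 1 := by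
  simp only [backwardFlowJacobian, mul_zero, exp_zero, mul_one, add_sub_cancel_left]
  field_simp

theorem backwardFlow_denom_pos (t : ℝ) {n : ℝ} (hn : 0 < n) (hnk : n ≤ k) :
    0 < n * exp (-γ * k * t) + k - n := by
  have := mul_pos hn (exp_pos (-γ * k * t))
  linarith

variable {n t : ℝ}

theorem hasDerivAt_backwardFlow_time (hD : n * exp (-γ * k * t) + k - n ≠ 0) :
    HasDerivAt (fun s => backwardFlow γ k n s)
      (-(γ * n * (k - n)) * backwardFlowJacobian γ k n t) t := by
  have hE := hasDerivAt_exp_const_mul (-γ * k) t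
  refine ((hE.const_mul (k * n)).div (((hE.const_mul n).add_const k).sub_const n)
    hD).congr_deriv ?_
  unfold backwardFlowJacobian
  field_simp
  ring

theorem hasDerivAt_backwardFlow_space (hD : n * exp (-γ * k * t) + k - n ≠ 0) :
    HasDerivAt (fun m => backwardFlow γ k m t) (backwardFlowJacobian γ k n t) n := by
  have hm := hasDerivAt_id' n
  refine (((hm.const_mul k).mul_const (exp (-γ * k * t))).div
    (((hm.mul_const (exp (-γ * k * t))).add_const k).fun_sub hm) hD).congr_deriv ?_
  unfold backwardFlowJacobian
  field_simp
  ring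

theorem hasDerivAt_backwardFlowJacobian_time (hD : n * exp (-γ * k * t) + k - n ≠ 0) :
    HasDerivAt (fun s => backwardFlowJacobian γ k n s)
      (γ * k ^ 3 * exp (-γ * k * t) *
          (2 * n * exp (-γ * k * t) - (n * exp (-γ * k * t) + k - n))
        / (n * exp (-γ * k * t) + k - n) ^ 3) t := by
  have hE := hasDerivAt_exp_const_mul (-γ * k) t
  refine ((hE.const_mul (k ^ 2)).div ((((hE.const_mul n).add_const k).sub_const n).fun_pow 2)
    (pow_ne_zero 2 hD)).congr_deriv ?_
  generalize exp (-γ * k * t) = e at *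
  generalize n * e + k - n = D at *
  field_simp
  ring

theorem hasDerivAt_backwardFlowJacobian_space (hD : n * exp (-γ * k * t) + k - n ≠ 0) :
    HasDerivAt (fun m => backwardFlowJacobian γ k m t)
      (-2 * k ^ 2 * exp (-γ * k * t) * (exp (-γ * k * t) - 1)
        / (n * exp (-γ * k * t) + k - n) ^ 3) n := by
  have hm := hasDerivAt_id' n
  refine ((hasDerivAt_const n (k ^ 2 * exp (-γ * k * t))).div
    ((((hm.mul_const (exp (-γ * k * t))).add_const k).fun_sub hm).fun_pow 2)
    (pow_ne_zero 2 hD)).congr_deriv ?_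
  generalize exp (-γ * k * t) = e at *
  generalize n * e + k - n = D at *
  field_simp
  ring

theorem continuity_jacobian_mul_comp_backwardFlow {f : ℝ → ℝ}
    (hf : DifferentiableAt ℝ f (backwardFlow γ k n t))
    (hD : n * exp (-γ * k * t) + k - n ≠ 0) :
    deriv (fun s => backwardFlowJacobian γ k n s * f (backwardFlow γ k n s)) t +
        γ * n * (k - n) *
          deriv (fun m => backwardFlowJacobian γ k m t * f (backwardFlow γ k m t)) n +
      γ * (k - 2 * n) * (backwardFlowJacobian γ k n t * f (backwardFlow γ k n t)) = 0 := by
  refine continuity_mul_comp_of_transport (hasDerivAt_backwardFlow_time hD)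
    (hasDerivAt_backwardFlow_space hD) (hasDerivAt_backwardFlowJacobian_time hD)
    (hasDerivAt_backwardFlowJacobian_space hD) hf (by ring) ?_
  unfold backwardFlowJacobian
  field_simp
  ring

end Logistic

theorem stmt4_general (γ k : ℝ) (hk : 0 < k)
    (u₀ : ℝ → ℝ) (hu₀ : ContDiff ℝ 1 u₀)
    (u : ℝ → ℝ → ℝ)
    (hu : ∀ n t, u n t =
      k ^ 2 * Real.exp (-γ * k * t) / (n * Real.exp (-γ * k * t) + k - n) ^ 2 *
        u₀ (k * n * Real.exp (-γ * k * t) / (n * Real.exp (-γ * k * t) + k - n))) :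
    (∀ n t : ℝ, 0 < n → n < k →
      deriv (fun s => u n s) t + γ * n * (k - n) * deriv (fun m => u m t) n +
        γ * (k - 2 * n) * u n t = 0) ∧
    (∀ n : ℝ, 0 < n → n < k → u n 0 = u₀ n) := by
  obtain rfl : u = fun n t =>
      Logistic.backwardFlowJacobian γ k n t * u₀ (Logistic.backwardFlow γ k n t) :=
    funext₂ hu
  refine ⟨fun n t hn hnk => ?_, fun n _ _ => ?_⟩
  · exact Logistic.continuity_jacobian_mul_comp_backwardFlow
      (hu₀.differentiable one_ne_zero _) (Logistic.backwardFlow_denom_pos t hn hnk.le).ne'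
  · simp only [Logistic.backwardFlowJacobian_zero hk.ne', Logistic.backwardFlow_zero hk.ne',
      one_mul]

/-- The explicit formula solves the logistic phase-space continuity equation
`∂u/∂t + γ n (k−n) ∂u/∂n + γ (k−2n) u = 0` on the strip `0 < n < k`, with
`u(n,0) = u₀(n)`. -/
theorem stmt4 (γ k : ℝ) (hγ : 0 ≤ γ) (hk : 0 < k)
    (u₀ : ℝ → ℝ) (hu₀ : ContDiff ℝ 1 u₀)
    (u : ℝ → ℝ → ℝ)
    (hu : ∀ n t, u n t =
      k ^ 2 * Real.exp (-γ * k * t) / (n * Real.exp (-γ * k * t) + k - n) ^ 2 *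
        u₀ (k * n * Real.exp (-γ * k * t) / (n * Real.exp (-γ * k * t) + k - n))) :
    (∀ n t : ℝ, 0 < n → n < k →
      deriv (fun s => u n s) t + γ * n * (k - n) * deriv (fun m => u m t) n +
        γ * (k - 2 * n) * u n t = 0) ∧
    (∀ n : ℝ, 0 < n → n < k → u n 0 = u₀ n) :=
  stmt4_general γ k hk u₀ hu₀ u hu
end

section
/- For constants α, β, and a continuous function R : [0,∞) → ℝ, define ξ(α,t) = ∫₀ᵗ R(t')·e^{-(α−β)t'}dt'. Then u(n,α,t) = e^{-(α−β)t}·u₀(n·e^{-(α−β)t} − αβ·ξ(α,t), α) satisfies the PDE ∂u/∂t + (αβ·R(t) + (α−β)·n)·∂u/∂n + (α−β)·u = 0 with u(n,α,0) = u₀(n,α). -/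
/-!
Along the characteristics `n' = a(t) + c n` of the transport equation
`∂ₜu + (a(t) + c n) ∂ₙu + c u = 0`, the quantity `n e^{-c t} - X(t)` with `X' = a e^{-c t}` is
constant, and `e^{c t} u` is constant too. Hence `e^{-c t} f(n e^{-c t} - X(t))` is a solution for
every differentiable `f`; the theorem is the case `c = α - β`, `a = αβ R`, `X = αβ ξ(α, ·)`.
-/

open Real

section Transport

variable {f : ℝ → ℝ} {c : ℝ} {a X : ℝ → ℝ}

noncomputable def transportSolution (f : ℝ → ℝ) (c : ℝ) (X : ℝ → ℝ) (n t : ℝ) : ℝ :=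
  exp (-c * t) * f (n * exp (-c * t) - X t)

lemma hasDerivAt_exp_neg_mul (c t : ℝ) :
    HasDerivAt (fun s => exp (-c * s)) (-c * exp (-c * t)) t := by
  simpa [mul_comm] using ((hasDerivAt_id t).const_mul (-c)).exp

lemma hasDerivAt_transportSolution_time {n t : ℝ}
    (hf : DifferentiableAt ℝ f (n * exp (-c * t) - X t))
    (hX : HasDerivAt X (a t * exp (-c * t)) t) :
    HasDerivAt (fun s => transportSolution f c X n s)
      (-c * exp (-c * t) * f (n * exp (-c * t) - X t) +
        exp (-c * t) * (deriv f (n * exp (-c * t) - X t) *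
          (n * (-c * exp (-c * t)) - a t * exp (-c * t)))) t :=
  (hasDerivAt_exp_neg_mul c t).mul
    (hf.hasDerivAt.comp t (((hasDerivAt_exp_neg_mul c t).const_mul n).sub hX))

lemma hasDerivAt_transportSolution_space {n t : ℝ}
    (hf : DifferentiableAt ℝ f (n * exp (-c * t) - X t)) :
    HasDerivAt (fun m => transportSolution f c X m t)
      (exp (-c * t) * (deriv f (n * exp (-c * t) - X t) * exp (-c * t))) n := by
  have hinner : HasDerivAt (fun m => m * exp (-c * t) - X t) (exp (-c * t)) n := by
    simpa using ((hasDerivAt_id n).mul_const (exp (-c * t))).sub_const (X t)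
  exact (hf.hasDerivAt.comp n hinner).const_mul (exp (-c * t))

theorem transportSolution_pde {n t : ℝ}
    (hf : DifferentiableAt ℝ f (n * exp (-c * t) - X t))
    (hX : HasDerivAt X (a t * exp (-c * t)) t) :
    deriv (fun s => transportSolution f c X n s) t +
        (a t + c * n) * deriv (fun m => transportSolution f c X m t) n +
        c * transportSolution f c X n t = 0 := by
  rw [(hasDerivAt_transportSolution_time hf hX).deriv,
    (hasDerivAt_transportSolution_space hf).deriv, transportSolution]
  ring

lemma transportSolution_zero (hX : X 0 = 0) (n : ℝ) : transportSolution f c X n 0 = f n := by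
  simp [transportSolution, hX]

end Transport

/-- With `ξ(α,t) = ∫₀ᵗ R(t') e^{-(α−β)t'} dt'`, the formula
`u(n,α,t) = e^{-(α−β)t} u₀(n e^{-(α−β)t} − αβ ξ(α,t), α)` satisfies the
biased-migration phase-space equation
`∂u/∂t + (αβ R(t) + (α−β)n) ∂u/∂n + (α−β)u = 0` with `u(n,α,0) = u₀(n,α)`. -/
theorem stmt13 (β : ℝ) (R : ℝ → ℝ) (hR : Continuous R)
    (u₀ : ℝ × ℝ → ℝ) (hu₀ : ContDiff ℝ 1 u₀)
    (ξ : ℝ → ℝ → ℝ)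
    (hξ : ∀ α t, ξ α t = ∫ t' in (0:ℝ)..t, R t' * Real.exp (-(α - β) * t'))
    (u : ℝ → ℝ → ℝ → ℝ)
    (hu : ∀ n α t, u n α t = Real.exp (-(α - β) * t) *
      u₀ (n * Real.exp (-(α - β) * t) - α * β * ξ α t, α)) :
    (∀ n α t : ℝ,
      deriv (fun s => u n α s) t +
        (α * β * R t + (α - β) * n) * deriv (fun m => u m α t) n +
        (α - β) * u n α t = 0) ∧
    (∀ n α : ℝ, u n α 0 = u₀ (n, α)) := by
  refine ⟨fun n α t => ?_, fun n α => ?_⟩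
  · have hf : Differentiable ℝ fun x => u₀ (x, α) :=
      (hu₀.differentiable one_ne_zero).comp (by fun_prop)
    have hintegrand : Continuous fun t' => R t' * exp (-(α - β) * t') := by fun_prop
    have hX : HasDerivAt (fun t => α * β * ξ α t) (α * β * R t * exp (-(α - β) * t)) t := by
      simpa only [hξ, mul_assoc] using
        (hintegrand.integral_hasStrictDerivAt 0 t).hasDerivAt.const_mul (α * β)
    simp only [hu]
    exact transportSolution_pde (a := fun s => α * β * R s) (hf _) hX
  · rw [hu]
    exact transportSolution_zero (f := fun x => u₀ (x, α)) (c := α - β)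
      (X := fun t => α * β * ξ α t) (by simp [hξ]) n
end

section
/- In the biased-migration system nᵢ' = (αᵢ − β)·nᵢ + αᵢ·β·(Σⱼnⱼ)/(Σⱼαⱼ) with all αᵢ > 0, β > 0, and all nᵢ(0) > 0: each nᵢ(t) stays strictly positive for all t ≥ 0, and a population i is instantaneously increasing at time t if and only if αᵢ/(Σⱼαⱼ) > (1 − αᵢ/β)·nᵢ(t)/(Σⱼnⱼ(t)); in particular every population with αᵢ ≥ β is strictly increasing at all times (given Σⱼnⱼ > 0). -/
/-!
Multiplying by the integrating factor `exp ((β - αᵢ) t)` turns the equation for `nᵢ` into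
`(nᵢ e^{(β-αᵢ)t})' = αᵢ β N e^{(β-αᵢ)t} / A`, so each `nᵢ` stays positive as long as the total
`N` stays nonnegative. Hence `N` can never reach `0`: at the first time it did, all `nᵢ`, and
thus `N` itself, would still be positive. Once `N > 0`, the growth criterion is the identity
`nᵢ' = β N (αᵢ/A - (1 - αᵢ/β) nᵢ/N)`.
-/

open Real Set Finset

theorem mul_exp_le_of_hasDerivAt_mul_add_nonneg {f g : ℝ → ℝ} {a b c : ℝ} (hab : a ≤ b)
    (hf : ∀ s ∈ Icc a b, HasDerivAt f (c * f s + g s) s) (hg : ∀ s ∈ Ioo a b, 0 ≤ g s) :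
    f a * exp (c * (b - a)) ≤ f b := by
  set h : ℝ → ℝ := fun s => f s * exp (-(c * s))
  have hh : ∀ s ∈ Icc a b, HasDerivAt h (g s * exp (-(c * s))) s := by
    intro s hs
    have hexp : HasDerivAt (fun s => exp (-(c * s))) (exp (-(c * s)) * -c) s := by
      simpa using ((hasDerivAt_id s).const_mul c).neg.exp
    exact ((hf s hs).mul hexp).congr_deriv (by ring)
  have hmono : MonotoneOn h (Icc a b) :=
    monotoneOn_of_hasDerivWithinAt_nonneg (convex_Icc a b)
      (fun s hs => (hh s hs).continuousAt.continuousWithinAt)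
      (fun s hs => (hh s (interior_subset hs)).hasDerivWithinAt)
      (fun s hs => mul_nonneg (hg s (by rwa [interior_Icc] at hs)) (exp_pos _).le)
  have hab' : h a ≤ h b := hmono (left_mem_Icc.2 hab) (right_mem_Icc.2 hab) hab
  calc f a * exp (c * (b - a)) = h a * exp (c * b) := by
        simp only [h, mul_assoc, ← exp_add]; ring_nf
    _ ≤ h b * exp (c * b) := by gcongr
    _ = f b := by simp only [h, mul_assoc, ← exp_add]; simp

theorem pos_of_nonneg_on_Ioo_imp_pos {N : ℝ → ℝ} {a : ℝ} (hN : ContinuousOn N (Ici a))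
    (hstep : ∀ t, a ≤ t → (∀ s ∈ Ioo a t, 0 ≤ N s) → 0 < N t) {t : ℝ} (ht : a ≤ t) :
    0 < N t := by
  by_contra! htN
  set S := Ici a ∩ N ⁻¹' Iic 0
  have hS : IsClosed S := hN.preimage_isClosed_of_isClosed isClosed_Ici isClosed_Iic
  have hbdd : BddBelow S := ⟨a, fun s hs => hs.1⟩
  have hfirst : sInf S ∈ S := hS.csInf_mem ⟨t, ht, htN⟩ hbdd
  refine not_lt.2 hfirst.2 (hstep _ hfirst.1 fun s hs => ?_)
  by_contra! hNs
  exact not_le.2 hs.2 (csInf_le hbdd ⟨hs.1.le, hNs.le⟩)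

def IsBiasedMigration {ι : Type*} [Fintype ι] (α : ι → ℝ) (β : ℝ) (n : ι → ℝ → ℝ) : Prop :=
  ∀ i t, HasDerivAt (n i) ((α i - β) * n i t + α i * β * (∑ j, n j t) / (∑ j, α j)) t

namespace IsBiasedMigration

variable {ι : Type*} [Fintype ι] {α : ι → ℝ} {β : ℝ} {n : ι → ℝ → ℝ}

theorem continuous (hn : IsBiasedMigration α β n) (i : ι) : Continuous (n i) :=
  continuous_iff_continuousAt.2 fun t => (hn i t).continuousAt

theorem pos_of_sum_nonneg (hn : IsBiasedMigration α β n) (hα : ∀ j, 0 ≤ α j) (hβ : 0 ≤ β)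
    {i : ι} (hi0 : 0 < n i 0) {t : ℝ} (ht : 0 ≤ t) (hN : ∀ s ∈ Ioo 0 t, 0 ≤ ∑ j, n j s) :
    0 < n i t := by
  have hlower := mul_exp_le_of_hasDerivAt_mul_add_nonneg ht (fun s _ => hn i s) fun s hs =>
    div_nonneg (mul_nonneg (mul_nonneg (hα i) hβ) (hN s hs)) (sum_nonneg fun j _ => hα j)
  exact (mul_pos hi0 (exp_pos _)).trans_le (by simpa using hlower)

theorem sum_pos [Nonempty ι] (hn : IsBiasedMigration α β n) (hα : ∀ j, 0 ≤ α j) (hβ : 0 ≤ β)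
    (h0 : ∀ j, 0 < n j 0) {t : ℝ} (ht : 0 ≤ t) : 0 < ∑ j, n j t :=
  pos_of_nonneg_on_Ioo_imp_pos
    (continuous_finsetSum _ fun j _ => hn.continuous j).continuousOn
    (fun _ hs hN => Finset.sum_pos (fun j _ => hn.pos_of_sum_nonneg hα hβ (h0 j) hs hN)
      univ_nonempty) ht

theorem pos (hn : IsBiasedMigration α β n) (hα : ∀ j, 0 ≤ α j) (hβ : 0 ≤ β)
    (h0 : ∀ j, 0 < n j 0) (i : ι) {t : ℝ} (ht : 0 ≤ t) : 0 < n i t :=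
  have : Nonempty ι := ⟨i⟩
  hn.pos_of_sum_nonneg hα hβ (h0 i) ht fun _ hs => (hn.sum_pos hα hβ h0 hs.1.le).le

theorem deriv_eq (hn : IsBiasedMigration α β n) (hβ : β ≠ 0) (i : ι) {t : ℝ}
    (hN : ∑ j, n j t ≠ 0) :
    deriv (n i) t =
      β * (∑ j, n j t) * (α i / ∑ j, α j - (1 - α i / β) * (n i t / ∑ j, n j t)) := by
  rw [(hn i t).deriv]
  field_simp
  ring

theorem deriv_pos_iff (hn : IsBiasedMigration α β n) (hβ : 0 < β) (i : ι) {t : ℝ}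
    (hN : 0 < ∑ j, n j t) :
    0 < deriv (n i) t ↔ (1 - α i / β) * (n i t / ∑ j, n j t) < α i / ∑ j, α j := by
  rw [hn.deriv_eq hβ.ne' i hN.ne', mul_pos_iff_of_pos_left (mul_pos hβ hN), sub_pos]

theorem deriv_pos_of_le (hn : IsBiasedMigration α β n) (hα : ∀ j, 0 ≤ α j) (hβ : 0 < β)
    {i : ι} (hβα : β ≤ α i) {t : ℝ} (hi : 0 ≤ n i t) (hN : 0 < ∑ j, n j t) :
    0 < deriv (n i) t := by
  have hαi : 0 < α i := hβ.trans_le hβα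
  have hA : 0 < ∑ j, α j := sum_pos' (fun j _ => hα j) ⟨i, mem_univ i, hαi⟩
  rw [(hn i t).deriv]
  exact add_pos_of_nonneg_of_pos (mul_nonneg (sub_nonneg.2 hβα) hi)
    (div_pos (mul_pos (mul_pos hαi hβ) hN) hA)

end IsBiasedMigration

/-- In the biased-migration system `nᵢ' = (αᵢ−β)nᵢ + αᵢβ N/A`: each population
stays strictly positive; a population is instantaneously increasing iff
`αᵢ/A > (1 − αᵢ/β) nᵢ/N`; and every population with `αᵢ ≥ β` is strictly
increasing at all times. -/
theorem stmt14 (P : ℕ) (α : Fin P → ℝ) (β : ℝ) (hα : ∀ i, 0 < α i) (hβ : 0 < β)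
    (n : Fin P → ℝ → ℝ)
    (hn : ∀ i t, HasDerivAt (n i)
      ((α i - β) * n i t + α i * β * (∑ j, n j t) / (∑ j, α j)) t)
    (hn0 : ∀ i, 0 < n i 0) :
    (∀ i, ∀ t : ℝ, 0 ≤ t → 0 < n i t) ∧
    (∀ i, ∀ t : ℝ, 0 ≤ t →
      (0 < deriv (n i) t ↔
        α i / (∑ j, α j) > (1 - α i / β) * (n i t / ∑ j, n j t))) ∧
    (∀ i, ∀ t : ℝ, 0 ≤ t → β ≤ α i → 0 < ∑ j, n j t → 0 < deriv (n i) t) := by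
  have hn : IsBiasedMigration α β n := hn
  have hα : ∀ i, 0 ≤ α i := fun i => (hα i).le
  have hpos : ∀ i, ∀ t : ℝ, 0 ≤ t → 0 < n i t := fun i _ ht => hn.pos hα hβ.le hn0 i ht
  refine ⟨hpos, fun i t ht => ?_, fun i t ht hβα hN => ?_⟩
  · have : Nonempty (Fin P) := ⟨i⟩
    exact hn.deriv_pos_iff hβ i (hn.sum_pos hα hβ.le hn0 ht)
  · exact hn.deriv_pos_of_le hα hβ hβα (hpos i t ht).le hN
end

section
/- Suppose u : ℝ × ℝ → ℝ (a function of n and t, for fixed α and δ > 0) is continuously differentiable, positive, and satisfies the implicit relation u(n,t) = (1 − αδ·t·u(n,t))·u₀(n·(1 − αδ·t·u(n,t))², α) on an open set where 1 − αδ·t·u > 0. Then u satisfies the Burgers-type PDE ∂u/∂t + 2αδ·n·u·∂u/∂n + αδ·u² = 0 and u(n,0) = u₀(n,α). -/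
/-!
Differentiating the implicit relation `u = w · u₀(n w², α)`, `w = 1 - αδ t u`, in `t` and
in `n` gives two linear equations for `∂u/∂t` and `∂u/∂n` sharing the factor `1 + αδ t K`,
where `K = u₀ + 2 n w² ∂₁u₀` is the derivative of `w ↦ w u₀(n w², α)`. Multiplying the
Burgers expression by that factor and substituting the relation itself gives `0`; the factor
cannot vanish, since then the `t`-equation would force `αδ u K = 0` while `αδ t K = -1`.
-/

open Filter Topology

theorem hasDerivAt_mul_comp_mul_sq {g m w : ℝ → ℝ} {B m' w' x : ℝ}
    (hw : HasDerivAt w w' x) (hm : HasDerivAt m m' x) (hg : HasDerivAt g B (m x * w x ^ 2)) :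
    HasDerivAt (fun s => w s * g (m s * w s ^ 2))
      (w' * (g (m x * w x ^ 2) + 2 * m x * w x ^ 2 * B) + m' * w x ^ 3 * B) x := by
  refine (hw.mul (hg.comp x (hm.mul (hw.pow 2)))).congr_deriv ?_
  simp only [Function.comp_apply, Pi.mul_apply, Pi.pow_apply]
  ring

section ImplicitSolution

variable {c : ℝ} {g : ℝ → ℝ} {u : ℝ → ℝ → ℝ} {S : Set (ℝ × ℝ)}

theorem eventuallyEq_of_mem_nhds_of_implicit {γ : ℝ → ℝ × ℝ} {x : ℝ} (hγ : ContinuousAt γ x)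
    (hS : S ∈ 𝓝 (γ x))
    (himp : ∀ p ∈ S, u p.1 p.2 =
      (1 - c * p.2 * u p.1 p.2) * g (p.1 * (1 - c * p.2 * u p.1 p.2) ^ 2)) :
    (fun s => u (γ s).1 (γ s).2) =ᶠ[𝓝 x] fun s => (1 - c * (γ s).2 * u (γ s).1 (γ s).2) *
      g ((γ s).1 * (1 - c * (γ s).2 * u (γ s).1 (γ s).2) ^ 2) :=
  (hγ.eventually_mem hS).mono fun s hs => himp (γ s) hs

theorem implicit_hasDerivAt_time
    (himp : ∀ p ∈ S, u p.1 p.2 =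
      (1 - c * p.2 * u p.1 p.2) * g (p.1 * (1 - c * p.2 * u p.1 p.2) ^ 2))
    {n t f' B : ℝ} (hS : S ∈ 𝓝 (n, t)) (hf : HasDerivAt (u n) f' t)
    (hg : HasDerivAt g B (n * (1 - c * t * u n t) ^ 2)) :
    f' = -(c * (u n t + t * f')) *
      (g (n * (1 - c * t * u n t) ^ 2) + 2 * n * (1 - c * t * u n t) ^ 2 * B) := by
  have hw : HasDerivAt (fun s => 1 - c * s * u n s) (-(c * (u n t + t * f'))) t :=
    ((((hasDerivAt_id' t).const_mul c).mul hf).const_sub 1).congr_deriv (by ring)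
  have hev := eventuallyEq_of_mem_nhds_of_implicit (γ := fun s => (n, s))
    (continuous_const.prodMk continuous_id).continuousAt hS himp
  refine hf.unique ((hasDerivAt_mul_comp_mul_sq hw (hasDerivAt_const t n) hg).congr_of_eventuallyEq
    hev) |>.trans (by ring)

theorem implicit_hasDerivAt_space
    (himp : ∀ p ∈ S, u p.1 p.2 =
      (1 - c * p.2 * u p.1 p.2) * g (p.1 * (1 - c * p.2 * u p.1 p.2) ^ 2))
    {n t f' B : ℝ} (hS : S ∈ 𝓝 (n, t)) (hf : HasDerivAt (fun m => u m t) f' n)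
    (hg : HasDerivAt g B (n * (1 - c * t * u n t) ^ 2)) :
    f' = -(c * t * f') *
        (g (n * (1 - c * t * u n t) ^ 2) + 2 * n * (1 - c * t * u n t) ^ 2 * B) +
      (1 - c * t * u n t) ^ 3 * B := by
  have hw : HasDerivAt (fun m => 1 - c * t * u m t) (-(c * t * f')) n :=
    (hf.const_mul (c * t)).const_sub 1
  have hev := eventuallyEq_of_mem_nhds_of_implicit (γ := fun m => (m, t))
    (continuous_id.prodMk continuous_const).continuousAt hS himp
  refine hf.unique ((hasDerivAt_mul_comp_mul_sq hw (hasDerivAt_id' n) hg).congr_of_eventuallyEq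
    hev) |>.trans (by ring)

end ImplicitSolution

theorem burgers_of_implicit_derivs {c n t U A B K ut un : ℝ} (hU : U ≠ 0)
    (hUA : U = (1 - c * t * U) * A) (hK : K = A + 2 * n * (1 - c * t * U) ^ 2 * B)
    (hut : ut = -(c * (U + t * ut)) * K) (hun : un = -(c * t * un) * K + (1 - c * t * U) ^ 3 * B) :
    ut + 2 * c * n * U * un + c * U ^ 2 = 0 := by
  have hden : 1 + c * t * K ≠ 0 := by
    intro h
    have hcK : c * K = 0 := by
      have : U * (c * K) = 0 := by linear_combination hut - ut * h
      exact (mul_eq_zero.mp this).resolve_left hU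
    exact one_ne_zero (by linear_combination h - t * hcK : (1 : ℝ) = 0)
  refine (mul_eq_zero.mp ?_).resolve_right hden
  linear_combination hut + 2 * c * n * U * hun + c * U * hUA - c * U * (1 - c * t * U) * hK

theorem stmt16_general (α δ : ℝ)
    (u₀ : ℝ × ℝ → ℝ) (hu₀ : ContDiff ℝ 1 u₀)
    (u : ℝ → ℝ → ℝ)
    (hu : ContDiff ℝ 1 (fun p : ℝ × ℝ => u p.1 p.2))
    (hpos : ∀ n t, 0 < u n t)
    (S : Set (ℝ × ℝ)) (hS : IsOpen S)
    (himp : ∀ p ∈ S, u p.1 p.2 =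
      (1 - α * δ * p.2 * u p.1 p.2) *
        u₀ (p.1 * (1 - α * δ * p.2 * u p.1 p.2) ^ 2, α)) :
    (∀ p ∈ S,
      deriv (fun s => u p.1 s) p.2 +
        2 * α * δ * p.1 * u p.1 p.2 * deriv (fun m => u m p.2) p.1 +
        α * δ * (u p.1 p.2) ^ 2 = 0) ∧
    (∀ n : ℝ, (n, (0:ℝ)) ∈ S → u n 0 = u₀ (n, α)) := by
  refine ⟨fun ⟨n, t⟩ hp => ?_, fun n hn => by simpa using himp (n, 0) hn⟩
  have hu' := hu.differentiable one_ne_zero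
  have hg : Differentiable ℝ fun x => u₀ (x, α) :=
    (hu₀.differentiable one_ne_zero).comp (differentiable_id.prodMk (differentiable_const α))
  have hut : HasDerivAt (u n) (deriv (u n) t) t :=
    (hu'.comp ((differentiable_const n).prodMk differentiable_id) t).hasDerivAt
  have hun : HasDerivAt (fun m => u m t) (deriv (fun m => u m t) n) n :=
    (hu'.comp (differentiable_id.prodMk (differentiable_const t)) n).hasDerivAt
  have hS' := hS.mem_nhds hp
  have hB := (hg (n * (1 - α * δ * t * u n t) ^ 2)).hasDerivAt
  linear_combination burgers_of_implicit_derivs (hpos n t).ne' (himp (n, t) hp) rfl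
    (implicit_hasDerivAt_time himp hS' hut hB) (implicit_hasDerivAt_space himp hS' hun hB)

/-- If a positive `C¹` function `u(n,t)` satisfies the implicit relation
`u = (1 − αδ t u) u₀(n (1 − αδ t u)², α)` on an open set where `1 − αδ t u > 0`,
then it solves the Burgers-type equation `∂u/∂t + 2αδ n u ∂u/∂n + αδ u² = 0`
there, and `u(n,0) = u₀(n,α)`. -/
theorem stmt16 (α δ : ℝ) (hα : 0 < α) (hδ : 0 < δ)
    (u₀ : ℝ × ℝ → ℝ) (hu₀ : ContDiff ℝ 1 u₀)
    (u : ℝ → ℝ → ℝ)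
    (hu : ContDiff ℝ 1 (fun p : ℝ × ℝ => u p.1 p.2))
    (hpos : ∀ n t, 0 < u n t)
    (S : Set (ℝ × ℝ)) (hS : IsOpen S)
    (hfac : ∀ p ∈ S, 0 < 1 - α * δ * p.2 * u p.1 p.2)
    (himp : ∀ p ∈ S, u p.1 p.2 =
      (1 - α * δ * p.2 * u p.1 p.2) *
        u₀ (p.1 * (1 - α * δ * p.2 * u p.1 p.2) ^ 2, α)) :
    (∀ p ∈ S,
      deriv (fun s => u p.1 s) p.2 +
        2 * α * δ * p.1 * u p.1 p.2 * deriv (fun m => u m p.2) p.1 +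
        α * δ * (u p.1 p.2) ^ 2 = 0) ∧
    (∀ n : ℝ, (n, (0:ℝ)) ∈ S → u n 0 = u₀ (n, α)) :=
  stmt16_general α δ u₀ hu₀ u hu hpos S hS himp
end
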